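/- arXiv:2212.05329 — 2 statements merged into one kernel-verified Lean document; each statement's English description precedes it below -/
import Mathlib

section
/- Let n = 2s+1 be odd, let G = G(n;k_1,...,k_n) be the unicyclic (p,q)-graph with k_i pendants at the i-th cycle vertex, and let m_1 ≥ m_2 ≥ ... ≥ m_n be the multiset {k_1,...,k_n} sorted in nonincreasing order. Then sm(G) ≥ 2q + 2 + (1/q)(m_2 + 2m_3 + ... + (n-1)m_n + n(n-1)/2). -/
/-!
Orient each edge of `G(n; k)` from a vertex `v` to `next v`, its successor on the cycle or the
cycle vertex it hangs from; then `v ↦ s(v, next v)` is a bijection from vertices onto edges.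
Summing the magic condition over the edges gives `q c = q (2q + 1) + ∑ᵢ (kᵢ + 1) f(aᵢ)`, and as
the `f(aᵢ)` are distinct positive integers, a rearrangement inequality (proved by slicing the
weights into layers) bounds the last sum below by `∑ᵢ (mᵢ + 1)(i + 1)`.

The infimum is only meaningful once some labeling exists. For odd `n` one is obtained by giving
the even cycle vertices and the pendants of the odd ones the low labels `1, …, A`, and the other
vertices the high labels `A + 1, …, q`, both block by block along the cycle: the edge sums
`f(u) + f(v)` then run through `q` consecutive values.
-/

/-- A super edge-magic total labeling of a graph `G` with `p = Fintype.card V` vertices and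
`q = G.edgeSet.ncard` edges: `fv` maps the vertices bijectively onto `{1,…,p}`, `fe` maps the
edges bijectively onto `{p+1,…,p+q}` (so together they form a bijection of `V ∪ E` onto
`{1,…,p+q}` with `f(V) = {1,…,p}`), and every edge `uv` satisfies `f(u)+f(v)+f(uv) = c`. -/
def IsSEMT {V : Type*} [Fintype V] (G : SimpleGraph V)
    (fv : V → ℕ) (fe : Sym2 V → ℕ) (c : ℕ) : Prop :=
  Set.BijOn fv Set.univ (Set.Icc 1 (Fintype.card V)) ∧
  Set.BijOn fe G.edgeSet
    (Set.Icc (Fintype.card V + 1) (Fintype.card V + G.edgeSet.ncard)) ∧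
  ∀ u v, G.Adj u v → fv u + fv v + fe s(u, v) = c

/-- The unicyclic graph `G(n; k₁, …, kₙ)`: a cycle on `Fin n` (vertex `i` adjacent to `i+1 mod n`)
with `k i` pendant vertices attached to the cycle vertex `i`. -/
def pendantCycle (n : ℕ) (k : Fin n → ℕ) :
    SimpleGraph (Fin n ⊕ Σ i : Fin n, Fin (k i)) :=
  SimpleGraph.fromRel (fun a b =>
    (∃ i j : Fin n, a = Sum.inl i ∧ b = Sum.inl j ∧ (i.val + 1) % n = j.val) ∨
    (∃ (i : Fin n) (j : Fin (k i)), a = Sum.inr ⟨i, j⟩ ∧ b = Sum.inl i))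

open Finset

theorem Finset.eq_range_card_of_isLowerSet {s : Finset ℕ} (hs : IsLowerSet (s : Set ℕ)) :
    s = range #s := by
  refine eq_of_subset_of_card_le (fun x hx => mem_range.2 ?_) (card_range _).le
  have hsub : range (x + 1) ⊆ s := fun y hy =>
    hs (Nat.lt_succ_iff.1 (mem_range.1 hy)) hx
  simpa using card_le_card hsub

theorem Finset.sum_nsmul_eq_sum_range_sum_filter {ι M : Type*} [Fintype ι] [AddCommMonoid M]
    (w : ι → ℕ) (x : ι → M) {N : ℕ} (hN : ∀ i, w i ≤ N) :
    ∑ i, w i • x i = ∑ t ∈ range N, ∑ i with t < w i, x i := by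
  calc ∑ i, w i • x i = ∑ i, ∑ _t ∈ range (w i), x i := by simp
    _ = ∑ t ∈ range N, ∑ i with t < w i, x i :=
      sum_comm' fun i t => by simpa using fun h => h.trans_le (hN i)

theorem sum_nsmul_le_sum_nsmul_of_antitone {n : ℕ} {w w' : Fin n → ℕ}
    (hperm : univ.val.map w' = univ.val.map w) (hw' : Antitone w')
    {a : Fin n → ℤ} (ha : Function.Injective a) {c : ℤ} (hc : ∀ i, c ≤ a i) :
    ∑ i, w' i • (c + i) ≤ ∑ i, w i • a i := by
  have hN : ∀ i, w i ≤ ∑ j, (w j + w' j) ∧ w' i ≤ ∑ j, (w j + w' j) := fun i => by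
    have := single_le_sum (f := fun j => w j + w' j) (fun _ _ => Nat.zero_le _) (mem_univ i)
    constructor <;> omega
  rw [sum_nsmul_eq_sum_range_sum_filter w' _ (fun i => (hN i).2),
    sum_nsmul_eq_sum_range_sum_filter w _ (fun i => (hN i).1)]
  gcongr with t
  have hcard : #{i | t < w' i} = #{i | t < w i} := by
    have h := congrArg (Multiset.countP (t < ·)) hperm
    rwa [Multiset.countP_map, Multiset.countP_map] at h
  have hlower : IsLowerSet (({i | t < w' i} : Finset (Fin n)).map Fin.valEmbedding : Set ℕ) := by
    intro x y hyx hx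
    simp only [coe_map, Set.mem_image, mem_coe, mem_filter, mem_univ, true_and,
      Fin.valEmbedding_apply] at hx ⊢
    obtain ⟨i, hi, rfl⟩ := hx
    exact ⟨⟨y, hyx.trans_lt i.isLt⟩, hi.trans_le (hw' (Fin.mk_le_of_le_val hyx)), rfl⟩
  calc ∑ i with t < w' i, (c + i)
        = ∑ x ∈ ({i | t < w' i} : Finset (Fin n)).map Fin.valEmbedding, (c + x) := by
        rw [sum_map]; rfl
    _ = ∑ x ∈ range #{i | t < w i}, (c + x) := by
        rw [eq_range_card_of_isLowerSet hlower, card_map, hcard]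
    _ ≤ ∑ y ∈ ({i | t < w i} : Finset (Fin n)).image a, y := by
        convert sum_range_le_sum (s := ({i | t < w i} : Finset (Fin n)).image a) (c := c)
          (by simpa using fun i (_ : t < w i) => hc i) using 2
        rw [card_image_of_injective _ ha]
    _ = ∑ i with t < w i, a i := sum_image fun _ _ _ _ h => ha h

theorem Set.BijOn.sum_univ_eq {α : Type*} [Fintype α] {f : α → ℕ} {t : Finset ℕ}
    (h : Set.BijOn f Set.univ t) : ∑ a, f a = ∑ x ∈ t, x :=
  sum_nbij f (fun a _ => h.mapsTo (Set.mem_univ a)) (by simpa using h.injOn)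
    (by simpa using h.surjOn) fun _ _ => rfl

theorem Set.bijOn_univ_of_surjOn {α β : Type*} [Fintype α] {f : α → β} {t : Finset β}
    (hf : ∀ a, f a ∈ t) (hsurj : ∀ b ∈ t, ∃ a, f a = b) (hcard : Fintype.card α ≤ #t) :
    Set.BijOn f Set.univ t := by
  have hmaps : Set.MapsTo f (Finset.univ : Finset α) t := fun a _ => hf a
  have hsurj' : Set.SurjOn f (Finset.univ : Finset α) t := fun b hb => by
    obtain ⟨a, rfl⟩ := hsurj b hb
    exact ⟨a, by simp, rfl⟩
  simpa using Set.BijOn.mk hmaps (injOn_of_surjOn_of_card_le f hmaps hsurj' (by simpa using hcard))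
    hsurj'

theorem two_mul_sum_Icc_id (a N : ℕ) :
    2 * ∑ x ∈ Icc (a + 1) (a + N), x = N * (2 * a + N + 1) := by
  induction N with
  | zero => simp
  | succ N ih =>
    rw [← add_assoc, sum_Icc_succ_top (by omega), mul_add, ih]
    ring

def blockStart (b : ℕ → ℕ) (i : ℕ) : ℕ := ∑ j ∈ range i, b j

theorem blockStart_add_one (b : ℕ → ℕ) (i : ℕ) :
    blockStart b (i + 1) = blockStart b i + b i :=
  sum_range_succ b i

theorem blockStart_add_lt_blockStart (b : ℕ → ℕ) {i j N : ℕ} (hj : j < b i) (hi : i < N) :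
    blockStart b i + j < blockStart b N :=
  calc blockStart b i + j < blockStart b (i + 1) := by rw [blockStart_add_one]; omega
    _ ≤ blockStart b N := sum_le_sum_of_subset (range_subset_range.2 hi)

theorem exists_eq_blockStart_add (b : ℕ → ℕ) {N x : ℕ} (hx : x < blockStart b N) :
    ∃ i < N, ∃ j < b i, x = blockStart b i + j := by
  induction N with
  | zero => simp [blockStart] at hx
  | succ N ih =>
    rw [blockStart_add_one] at hx
    by_cases hxN : x < blockStart b N
    · obtain ⟨i, hi, j, hj, rfl⟩ := ih hxN
      exact ⟨i, by omega, j, hj, rfl⟩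
    · exact ⟨N, by omega, x - blockStart b N, by omega, by omega⟩

theorem val_finRotate {n : ℕ} (i : Fin n) :
    (finRotate n i : ℕ) = if (i : ℕ) + 1 = n then 0 else (i : ℕ) + 1 := by
  obtain ⟨n, rfl⟩ : ∃ m, n = m + 1 := ⟨n - 1, by have := i.pos; omega⟩
  rw [coe_finRotate]
  split_ifs <;> simp_all [Fin.ext_iff]

theorem add_one_mod_eq_val_finRotate {n : ℕ} (i : Fin n) :
    ((i : ℕ) + 1) % n = finRotate n i := by
  rw [val_finRotate]
  split_ifs with h
  · simp [h]
  · exact Nat.mod_eq_of_lt (by omega)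

namespace PendantCycle

variable {n : ℕ} {k : Fin n → ℕ}

abbrev Vert (n : ℕ) (k : Fin n → ℕ) : Type := Fin n ⊕ Σ i : Fin n, Fin (k i)

def next : Vert n k → Vert n k
  | .inl i => .inl (finRotate n i)
  | .inr ⟨i, _⟩ => .inl i

def edge (v : Vert n k) : Sym2 (Vert n k) := s(v, next v)

theorem adj_next (hn : 2 ≤ n) (v : Vert n k) : (pendantCycle n k).Adj v (next v) := by
  rw [pendantCycle, SimpleGraph.fromRel_adj]
  rcases v with i | ⟨i, j⟩
  · refine ⟨?_, .inl (.inl ⟨i, _, rfl, rfl, add_one_mod_eq_val_finRotate i⟩)⟩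
    simp only [next, ne_eq, Sum.inl.injEq, Fin.ext_iff, val_finRotate]
    split_ifs <;> omega
  · exact ⟨by simp [next], .inl (.inr ⟨i, j, rfl, rfl⟩)⟩

theorem range_edge (hn : 2 ≤ n) : Set.range (edge (k := k)) = (pendantCycle n k).edgeSet := by
  refine subset_antisymm (Set.range_subset_iff.2 fun v => adj_next hn v) fun e he => ?_
  induction e with
  | _ u v =>
    rw [SimpleGraph.mem_edgeSet, pendantCycle, SimpleGraph.fromRel_adj] at he
    obtain ⟨-, (⟨i, j, rfl, rfl, hij⟩ | ⟨i, j, rfl, rfl⟩) |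
      (⟨i, j, rfl, rfl, hij⟩ | ⟨i, j, rfl, rfl⟩)⟩ := he
    · refine ⟨.inl i, ?_⟩
      rw [add_one_mod_eq_val_finRotate, ← Fin.ext_iff] at hij
      simp [edge, next, hij]
    · exact ⟨.inr ⟨i, j⟩, rfl⟩
    · refine ⟨.inl i, ?_⟩
      rw [add_one_mod_eq_val_finRotate, ← Fin.ext_iff] at hij
      simp [edge, next, hij, Sym2.eq_swap]
    · exact ⟨.inr ⟨i, j⟩, Sym2.eq_swap⟩

theorem edge_injective (hn : 3 ≤ n) : Function.Injective (edge (k := k)) := by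
  intro u v h
  rcases u with i | ⟨i, j⟩ <;> rcases v with i' | ⟨i', j'⟩ <;>
    simp only [edge, next, Sym2.eq_iff, Sum.inl.injEq, Sum.inr.injEq, reduceCtorEq, false_and,
      and_false, or_false] at h
  · rcases h with ⟨rfl, -⟩ | ⟨h1, h2⟩
    · rfl
    · rw [Fin.ext_iff, val_finRotate] at h1 h2
      have := i.isLt; have := i'.isLt
      split_ifs at h1 h2 <;> omega
  · rw [h.1]

theorem card_vert : Fintype.card (Vert n k) = n + ∑ i, k i := by simp

theorem ncard_edgeSet (hn : 3 ≤ n) : (pendantCycle n k).edgeSet.ncard = n + ∑ i, k i := by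
  rw [← range_edge (by omega), ← Set.image_univ,
    Set.ncard_image_of_injective _ (edge_injective hn), Set.ncard_univ, Nat.card_eq_fintype_card,
    card_vert]

theorem sum_comp_next (f : Vert n k → ℕ) :
    ∑ v, f (next v) = ∑ i, (k i + 1) * f (.inl i) := by
  rw [Fintype.sum_sum_type, Fintype.sum_sigma]
  simp only [next, sum_const, card_univ, Fintype.card_fin, smul_eq_mul, add_mul, one_mul,
    sum_add_distrib]
  rw [Equiv.sum_comp (finRotate n) fun i => f (.inl i), add_comm]

theorem card_mul_magic_eq (hn : 3 ≤ n) {fv : Vert n k → ℕ} {fe : Sym2 (Vert n k) → ℕ}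
    {c : ℕ} (h : IsSEMT (pendantCycle n k) fv fe c) :
    (n + ∑ i, k i) * c =
      (n + ∑ i, k i) * (2 * (n + ∑ i, k i) + 1) + ∑ i, (k i + 1) * fv (.inl i) := by
  obtain ⟨hv, he, hmagic⟩ := h
  rw [card_vert] at hv he
  rw [ncard_edgeSet hn] at he
  set q := n + ∑ i, k i
  have hedge : Set.BijOn edge Set.univ (pendantCycle n k).edgeSet := by
    rw [← range_edge (by omega), ← Set.image_univ]
    exact (edge_injective hn).injOn.bijOn_image
  have hsum_fv : ∑ v, fv v = ∑ x ∈ Icc (0 + 1) (0 + q), x :=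
    Set.BijOn.sum_univ_eq (by simpa using hv)
  have hsum_fe : ∑ v, fe (edge v) = ∑ x ∈ Icc (q + 1) (q + q), x :=
    Set.BijOn.sum_univ_eq (f := fe ∘ edge) (by simpa using he.comp hedge)
  have hgauss₁ := two_mul_sum_Icc_id 0 q
  have hgauss₂ := two_mul_sum_Icc_id q q
  have hmagic' (v : Vert n k) : fv v + fv (next v) + fe (edge v) = c :=
    hmagic v (next v) (adj_next (by omega) v)
  calc q * c = ∑ v, (fv v + fv (next v) + fe (edge v)) := by
        rw [sum_congr rfl fun v _ => hmagic' v, sum_const, card_univ, card_vert, smul_eq_mul]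
    _ = _ := by
        rw [sum_add_distrib, sum_add_distrib, sum_comp_next, hsum_fv, hsum_fe]
        linarith

theorem magic_lower_bound (hn : 3 ≤ n) {m : Fin n → ℕ} (hm : Antitone m)
    (hperm : univ.val.map m = univ.val.map k) {fv : Vert n k → ℕ} {fe : Sym2 (Vert n k) → ℕ}
    {c : ℕ} (h : IsSEMT (pendantCycle n k) fv fe c) :
    ((n : ℚ) + ∑ i, (k i : ℚ)) * (2 * ((n : ℚ) + ∑ i, (k i : ℚ)) + 2) +
        ((∑ i : Fin n, (i : ℚ) * m i) + n * (n - 1) / 2) ≤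
      ((n : ℚ) + ∑ i, (k i : ℚ)) * c := by
  have hmagic : ((n : ℚ) + ∑ i, (k i : ℚ)) * c = ((n : ℚ) + ∑ i, (k i : ℚ)) *
      (2 * ((n : ℚ) + ∑ i, (k i : ℚ)) + 1) + ∑ i, ((k i : ℚ) + 1) * fv (.inl i) := by
    exact_mod_cast card_mul_magic_eq hn h
  have hfv := h.1
  have hrearr : ∑ i, ((m i : ℚ) + 1) * (1 + i) ≤ ∑ i, ((k i : ℚ) + 1) * fv (.inl i) := by
    have hperm' := congrArg (Multiset.map (· + 1)) hperm
    simp only [Multiset.map_map, Function.comp_def] at hperm'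
    have hinj : Function.Injective fun i => (fv (.inl i) : ℤ) := fun i j hij =>
      Sum.inl_injective (hfv.injOn (Set.mem_univ _) (Set.mem_univ _) (by simpa using hij))
    have := sum_nsmul_le_sum_nsmul_of_antitone hperm' (fun i j hij => by simpa using hm hij) hinj
      (c := 1) fun i => by simpa using (hfv.mapsTo (Set.mem_univ (.inl i))).1
    simp only [nsmul_eq_mul] at this
    exact_mod_cast this
  have hsum : ∑ i, (m i : ℚ) = ∑ i, (k i : ℚ) := by
    exact_mod_cast congrArg Multiset.sum hperm
  have hgauss : (∑ i : Fin n, (i : ℚ)) * 2 = n * (n - 1) := by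
    have := sum_range_id_mul_two n
    rw [← Fin.sum_univ_eq_sum_range] at this
    qify [show 1 ≤ n by omega] at this
    exact this
  have hexpand : ∑ i, ((m i : ℚ) + 1) * (1 + i) =
      (∑ i : Fin n, (i : ℚ) * m i) + ∑ i, (m i : ℚ) + n + ∑ i : Fin n, (i : ℚ) := by
    simp only [mul_add, sum_add_distrib, mul_one, mul_comm, sum_const, card_univ,
      Fintype.card_fin, nsmul_eq_mul]
    ring
  linarith

section Labeling

variable (k)

def pendants (i : ℕ) : ℕ := if h : i < n then k ⟨i, h⟩ else 0

def lowSize (i : ℕ) : ℕ := if i % 2 = 0 then 1 else pendants k i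

def highSize (i : ℕ) : ℕ := if i % 2 = 0 then pendants k i else 1

def edgeSize (i : ℕ) : ℕ := pendants k i + 1

def label : Vert n k → ℕ
  | .inl i =>
    if (i : ℕ) % 2 = 0 then 1 + blockStart (lowSize k) i
    else blockStart (lowSize k) n + 1 + blockStart (highSize k) i
  | .inr ⟨i, j⟩ =>
    if (i : ℕ) % 2 = 0 then blockStart (lowSize k) n + 1 + blockStart (highSize k) i + j
    else 1 + blockStart (lowSize k) i + j

-- The place of the edge sum `label v + label (next v)` among `q` consecutive values: the closing
-- edge of the cycle joins two low labels (`n` is odd) and comes first.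
def rank : Vert n k → ℕ
  | .inl i => if (i : ℕ) + 1 = n then 0 else blockStart (edgeSize k) i + pendants k i + 1
  | .inr ⟨i, j⟩ => blockStart (edgeSize k) i + j + 1

def magicConstant : ℕ := 2 * (n + ∑ i, k i) + blockStart (lowSize k) n + 1

def edgeLabel : Sym2 (Vert n k) → ℕ :=
  Sym2.lift ⟨fun u v => magicConstant k - (label k u + label k v), fun u v => by
    simp only [add_comm]⟩

end Labeling

theorem pendants_val (i : Fin n) : pendants k i = k i := by
  simp [pendants]

theorem blockStart_lowSize_add_blockStart_highSize (i : ℕ) :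
    blockStart (lowSize k) i + blockStart (highSize k) i = blockStart (edgeSize k) i := by
  simp only [blockStart, ← sum_add_distrib]
  refine sum_congr rfl fun j _ => ?_
  simp only [lowSize, highSize, edgeSize]
  split_ifs <;> omega

theorem blockStart_edgeSize : blockStart (edgeSize k) n = n + ∑ i, k i := by
  simp only [blockStart, edgeSize, sum_add_distrib, sum_const, card_range, smul_eq_mul, mul_one,
    ← Fin.sum_univ_eq_sum_range, pendants_val]
  ring

theorem label_mem (v : Vert n k) : label k v ∈ Icc 1 (n + ∑ i, k i) := by
  have hsplit := blockStart_lowSize_add_blockStart_highSize (k := k) n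
  rw [← blockStart_edgeSize, mem_Icc, ← hsplit]
  rcases v with i | ⟨i, j⟩ <;> rcases Nat.mod_two_eq_zero_or_one i with hpar | hpar
  · have := blockStart_add_lt_blockStart (lowSize k) (j := 0) (by simp [lowSize, hpar]) i.isLt
    simp only [label, hpar, if_true]
    omega
  · have := blockStart_add_lt_blockStart (highSize k) (j := 0) (by simp [highSize, hpar]) i.isLt
    simp only [label, hpar, one_ne_zero, if_false]
    omega
  · have := blockStart_add_lt_blockStart (highSize k) (j := j)
      (by simp [highSize, hpar, pendants_val]) i.isLt
    simp only [label, hpar, if_true]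
    omega
  · have := blockStart_add_lt_blockStart (lowSize k) (j := j)
      (by simp [lowSize, hpar, pendants_val]) i.isLt
    simp only [label, hpar, one_ne_zero, if_false]
    omega

theorem label_surj {x : ℕ} (hx : x ∈ Icc 1 (n + ∑ i, k i)) : ∃ v, label k v = x := by
  have hsplit := blockStart_lowSize_add_blockStart_highSize (k := k) n
  rw [← blockStart_edgeSize, mem_Icc, ← hsplit] at hx
  by_cases hlow : x ≤ blockStart (lowSize k) n
  · obtain ⟨i, hi, j, hj, hx'⟩ :=
      exists_eq_blockStart_add (lowSize k) (N := n) (x := x - 1) (by omega)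
    rcases Nat.mod_two_eq_zero_or_one i with hpar | hpar
    · simp only [lowSize, hpar, if_true] at hj
      exact ⟨.inl ⟨i, hi⟩, by simp only [label, hpar, if_true]; omega⟩
    · simp only [lowSize, hpar, one_ne_zero, if_false, pendants, hi, dif_pos] at hj
      refine ⟨.inr ⟨⟨i, hi⟩, ⟨j, hj⟩⟩, ?_⟩
      simp only [label, hpar, one_ne_zero, if_false]
      omega
  · obtain ⟨i, hi, j, hj, hx'⟩ :=
      exists_eq_blockStart_add (highSize k) (N := n) (x := x - blockStart (lowSize k) n - 1)
        (by omega)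
    rcases Nat.mod_two_eq_zero_or_one i with hpar | hpar
    · simp only [highSize, hpar, if_true, pendants, hi, dif_pos] at hj
      exact ⟨.inr ⟨⟨i, hi⟩, ⟨j, hj⟩⟩, by simp only [label, hpar, if_true]; omega⟩
    · simp only [highSize, hpar, one_ne_zero, if_false] at hj
      exact ⟨.inl ⟨i, hi⟩, by simp only [label, hpar, one_ne_zero, if_false]; omega⟩

theorem rank_lt (v : Vert n k) : rank k v < n + ∑ i, k i := by
  rw [← blockStart_edgeSize]
  rcases v with i | ⟨i, j⟩
  · have hnext := blockStart_add_one (edgeSize k) i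
    have := i.isLt
    simp only [rank]
    split_ifs with hi
    · have := blockStart_add_lt_blockStart (edgeSize k) (j := 0) (by simp [edgeSize]) i.isLt
      omega
    · have := blockStart_add_lt_blockStart (edgeSize k) (i := i + 1) (j := 0) (N := n)
        (by simp [edgeSize]) (by omega)
      simp only [edgeSize] at hnext
      omega
  · have hj : (j : ℕ) + 1 < edgeSize k i := by simp [edgeSize, pendants_val]
    have := blockStart_add_lt_blockStart (edgeSize k) hj i.isLt
    simp only [rank]
    omega

theorem rank_surj {x : ℕ} (hx : x < n + ∑ i, k i) : ∃ v, rank k v = x := by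
  have hn : 0 < n := by
    by_contra h0
    obtain rfl : n = 0 := by omega
    simp at hx
  rw [← blockStart_edgeSize] at hx
  rcases Nat.eq_zero_or_pos x with rfl | hpos
  · exact ⟨.inl ⟨n - 1, by omega⟩, by simp [rank]; omega⟩
  obtain ⟨i, hi, j, hj, hx'⟩ :=
    exists_eq_blockStart_add (edgeSize k) (N := n) (x := x - 1) (by omega)
  simp only [edgeSize] at hj
  by_cases hjk : j < pendants k i
  · simp only [pendants, hi, dif_pos] at hjk
    exact ⟨.inr ⟨⟨i, hi⟩, ⟨j, hjk⟩⟩, by simp only [rank]; omega⟩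
  · have hlast : i + 1 ≠ n := by
      rintro rfl
      have := blockStart_add_one (edgeSize k) i
      simp only [edgeSize] at this
      omega
    exact ⟨.inl ⟨i, hi⟩, by simp only [rank, hlast, if_false]; omega⟩

theorem label_add_label_next (ho : n % 2 = 1) (v : Vert n k) :
    label k v + label k (next v) = blockStart (lowSize k) n + 1 + rank k v := by
  rcases v with i | ⟨i, j⟩
  · simp only [label, next, rank, val_finRotate]
    by_cases hlast : (i : ℕ) + 1 = n
    · have hpar : (i : ℕ) % 2 = 0 := by omega
      have hlow : blockStart (lowSize k) n = blockStart (lowSize k) i + 1 := by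
        have := blockStart_add_one (lowSize k) i
        simp only [hlast, lowSize, hpar, if_true] at this
        exact this
      simp only [hlast, hpar, if_true, blockStart, range_zero, sum_empty] at hlow ⊢
      omega
    · have hlow := blockStart_add_one (lowSize k) i
      have hhigh := blockStart_add_one (highSize k) i
      have hsplit := blockStart_lowSize_add_blockStart_highSize (k := k) i
      simp only [hlast, if_false]
      rcases Nat.mod_two_eq_zero_or_one i with hpar | hpar
      · have hpar' : ((i : ℕ) + 1) % 2 = 1 := by omega
        simp only [lowSize, highSize, hpar, hpar', if_true, one_ne_zero, if_false,
          pendants_val] at hlow hhigh ⊢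
        omega
      · have hpar' : ((i : ℕ) + 1) % 2 = 0 := by omega
        simp only [lowSize, highSize, hpar, hpar', if_true, one_ne_zero, if_false,
          pendants_val] at hlow hhigh ⊢
        omega
  · have hsplit := blockStart_lowSize_add_blockStart_highSize (k := k) i
    simp only [label, next, rank]
    split_ifs <;> omega

theorem edgeLabel_edge (ho : n % 2 = 1) (v : Vert n k) :
    edgeLabel k (edge v) = 2 * (n + ∑ i, k i) - rank k v := by
  have := label_add_label_next ho v
  simp only [edgeLabel, edge, Sym2.lift_mk, magicConstant]
  omega

theorem isSEMT_label (hn : 3 ≤ n) (ho : n % 2 = 1) :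
    IsSEMT (pendantCycle n k) (label k) (edgeLabel k) (magicConstant k) := by
  refine ⟨?_, ?_, fun u v _ => ?_⟩
  · rw [card_vert, ← coe_Icc]
    exact Set.bijOn_univ_of_surjOn label_mem (fun x hx => label_surj hx) (by simp)
  · rw [card_vert, ncard_edgeSet hn, ← range_edge (by omega), ← Set.image_univ,
      ← Set.bijOn_comp_iff (edge_injective hn).injOn, ← coe_Icc]
    refine Set.bijOn_univ_of_surjOn (fun v => ?_) (fun x hx => ?_) (by simp)
    · have := rank_lt v
      simp only [Function.comp_apply, edgeLabel_edge ho, mem_Icc]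
      omega
    · rw [mem_Icc] at hx
      obtain ⟨v, hv⟩ := rank_surj (k := k) (x := 2 * (n + ∑ i, k i) - x) (by omega)
      exact ⟨v, by simp only [Function.comp_apply, edgeLabel_edge ho]; omega⟩
  · have hu := label_mem u
    have hv := label_mem v
    simp only [mem_Icc] at hu hv
    simp only [edgeLabel, Sym2.lift_mk, magicConstant]
    omega

end PendantCycle

/-- Lower bound for the strength of `G(n; k₁,…,kₙ)`: if `m₁ ≥ m₂ ≥ ⋯ ≥ mₙ` is the multiset
`{k₁,…,kₙ}` sorted in nonincreasing order (here `m i` is `m_{i+1}`), then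
`sm(G) ≥ 2q + 2 + (1/q)(m₂ + 2m₃ + ⋯ + (n-1)mₙ + n(n-1)/2)` where `q = n + Σ kᵢ`. -/
theorem stmt_7 (n : ℕ) (hn : 3 ≤ n) (ho : Odd n) (k m : Fin n → ℕ)
    (hanti : ∀ i j : Fin n, i ≤ j → m j ≤ m i)
    (hperm : Finset.univ.val.map m = Finset.univ.val.map k) :
    2 * ((n : ℚ) + ∑ i, (k i : ℚ)) + 2 +
        (1 / ((n : ℚ) + ∑ i, (k i : ℚ))) *
          ((∑ i : Fin n, (i.val : ℚ) * (m i : ℚ)) + (n : ℚ) * ((n : ℚ) - 1) / 2) ≤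
      ((sInf {c | ∃ fv fe, IsSEMT (pendantCycle n k) fv fe c} : ℕ) : ℚ) := by
  have hne : {c | ∃ fv fe, IsSEMT (pendantCycle n k) fv fe c}.Nonempty :=
    ⟨_, _, _, PendantCycle.isSEMT_label hn (Nat.odd_iff.1 ho)⟩
  obtain ⟨fv, fe, hmin⟩ := Nat.sInf_mem hne
  have hbound := PendantCycle.magic_lower_bound hn hanti hperm hmin
  set q : ℚ := (n : ℚ) + ∑ i, (k i : ℚ)
  set c := sInf {c | ∃ fv fe, IsSEMT (pendantCycle n k) fv fe c}
  have hq : 0 < q := by positivity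
  calc 2 * q + 2 +
        1 / q * ((∑ i : Fin n, (i.val : ℚ) * (m i : ℚ)) + (n : ℚ) * ((n : ℚ) - 1) / 2)
      = (q * (2 * q + 2) + ((∑ i : Fin n, (i : ℚ) * m i) + n * (n - 1) / 2)) / q := by
        field_simp
    _ ≤ q * c / q := by gcongr
    _ = c := by field_simp
end

section
/- Let n ≥ 3 be odd, k ≥ 0, and 1 ≤ c < 2n(k+1)/(n-3). Any super edge-magic total labeling f of G_{n,k,c} satisfies c(f) ≥ 2n(k+1) + 2c + (n+3)/2, i.e., sm(G_{n,k,c}) ≥ 2n(k+1) + 2c + (n+3)/2. -/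
/-! Since `G_{n,k,c}` is unicyclic, `v ↦ {v, succ v}` (the successor of `aᵢ` being `aᵢ₊₁`, that of
a pendant its neighbour) is a bijection from the `p` vertices onto the `p` edges. Summing
`f u + f v + f(uv) = c(f)` over the edges therefore gives
`p · c(f) = p (2p + 1) + Σᵢ (kᵢ + 1) f(aᵢ)`. The `n` cycle labels are distinct and positive, so
they sum to at least `n(n+1)/2`, and `f(aₙ) ≥ 1`; when `c (n - 3) < 2n(k+1)` this forces
`c(f) ≥ 2p + (n+3)/2`.

The infimum needs the set of magic constants to be nonempty. With `n = 2m + 1` and the cycle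
indexed by `i ∈ ℤ/n`, label the cycle vertex `i` by `1 + i/2`, its `j`-th pendant (`j < k`) by
`1 + n(j+1) + (i+1)/2`, and the surplus pendants of the last vertex by the top labels. The edge
sums then are `m + 2, …, m + 1 + p`, and a vertex labeling with consecutive edge sums extends to
a super edge-magic one (Figueroa-Centeno, Ichishima, Muntaner-Batle). -/

open Finset in
theorem sum_Icc_id_mul_two (a b : ℕ) :
    (∑ x ∈ Icc (a + 1) (a + b), x) * 2 = b * (2 * a + b + 1) := by
  induction b with
  | zero => simp
  | succ b ih =>
    rw [← add_assoc, sum_Icc_succ_top (by omega), add_mul, ih]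
    ring

open Finset in
theorem Finset.sum_Icc_card_le_sum (s : Finset ℕ) (hs : ∀ x ∈ s, 1 ≤ x) :
    ∑ x ∈ Icc 1 #s, x ≤ ∑ x ∈ s, x := by
  induction s using Finset.induction_on_max with
  | empty => simp
  | insert a s hlt ih =>
    have ha : a ∉ s := fun h => lt_irrefl a (hlt a h)
    have hcard : #s + 1 ≤ a := by
      have : s ⊆ Icc 1 (a - 1) := fun x hx =>
        mem_Icc.2 ⟨hs x (mem_insert_of_mem hx), by have := hlt x hx; omega⟩
      have hle := card_le_card this
      have := hs a (mem_insert_self a s)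
      simp only [Nat.card_Icc] at hle
      omega
    rw [card_insert_of_notMem ha, sum_insert ha, sum_Icc_succ_top (by omega)]
    have := ih fun x hx => hs x (mem_insert_of_mem hx)
    omega

theorem Fintype.sum_Icc_card_le_sum_of_injective {ι : Type*} [Fintype ι] {f : ι → ℕ}
    (hf : Function.Injective f) (hpos : ∀ i, 1 ≤ f i) :
    ∑ x ∈ Finset.Icc 1 (Fintype.card ι), x ≤ ∑ i, f i := by
  classical
  have := Finset.sum_Icc_card_le_sum (Finset.univ.image f) (by simpa using hpos)
  rwa [Finset.card_image_of_injective _ hf, Finset.card_univ,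
    Finset.sum_image fun x _ y _ h => hf h] at this

theorem Fintype.sum_eq_sum_Icc_of_bijOn {ι : Type*} [Fintype ι] {f : ι → ℕ} {a b : ℕ}
    (hf : Set.BijOn f Set.univ (Set.Icc a b)) : ∑ i, f i = ∑ x ∈ Finset.Icc a b, x :=
  Finset.sum_nbij f (fun i _ => by simpa using hf.mapsTo (Set.mem_univ i))
    (by simpa using hf.injOn) (by simpa using hf.surjOn) fun _ _ => rfl

theorem Fintype.bijOn_Icc_of_injective {ι : Type*} [Fintype ι] {f : ι → ℕ} {a : ℕ}
    (hf : Function.Injective f) (hmaps : ∀ i, f i ∈ Set.Icc (a + 1) (a + Fintype.card ι)) :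
    Set.BijOn f Set.univ (Set.Icc (a + 1) (a + Fintype.card ι)) := by
  refine ⟨fun i _ => hmaps i, hf.injOn, ?_⟩
  have := Finset.surjOn_of_injOn_of_card_le (s := Finset.univ)
    (t := Finset.Icc (a + 1) (a + Fintype.card ι)) f (by simpa using fun i => hmaps i)
    hf.injOn (by simp)
  simpa using this

def edgeSum {V : Type*} (f : V → ℕ) : Sym2 V → ℕ :=
  Sym2.lift ⟨fun u v => f u + f v, fun _ _ => add_comm _ _⟩

theorem edgeSum_mk {V : Type*} (f : V → ℕ) (u v : V) : edgeSum f s(u, v) = f u + f v := rfl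

theorem isSEMT_of_bijOn_edgeSum {V : Type*} [Fintype V] {G : SimpleGraph V} {fv : V → ℕ}
    {s : ℕ} (hv : Set.BijOn fv Set.univ (Set.Icc 1 (Fintype.card V)))
    (hs : Set.BijOn (edgeSum fv) G.edgeSet (Set.Icc (s + 1) (s + G.edgeSet.ncard))) :
    IsSEMT G fv (fun e => Fintype.card V + G.edgeSet.ncard + s + 1 - edgeSum fv e)
      (Fintype.card V + G.edgeSet.ncard + s + 1) := by
  refine ⟨hv, ⟨fun e he => ?_, fun e he e' he' h => ?_, fun y hy => ?_⟩, fun u v huv => ?_⟩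
  · have := hs.mapsTo he
    simp only [Set.mem_Icc] at this ⊢
    omega
  · have h₁ := hs.mapsTo he
    have h₂ := hs.mapsTo he'
    simp only [Set.mem_Icc] at h₁ h₂
    dsimp only at h
    exact hs.injOn he he' (by omega)
  · obtain ⟨e, he, hey⟩ := hs.surjOn (show Fintype.card V + G.edgeSet.ncard + s + 1 - y ∈ _ by
      simp only [Set.mem_Icc] at hy ⊢; omega)
    refine ⟨e, he, ?_⟩
    simp only [Set.mem_Icc] at hy
    dsimp only
    omega
  · have := hs.mapsTo (G.mem_edgeSet.2 huv)
    simp only [Set.mem_Icc, edgeSum_mk] at this ⊢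
    omega

theorem Fin.val_add_one_eq_ite {n : ℕ} [NeZero n] (i : Fin n) :
    (i + 1).val = if i.val + 1 = n then 0 else i.val + 1 := by
  rw [Fin.val_add, Fin.val_one', Nat.add_mod_mod]
  split_ifs with h
  · simp [h]
  · exact Nat.mod_eq_of_lt (by omega)

namespace pendantCycle

variable {n : ℕ} [NeZero n] {k : Fin n → ℕ}

def partner : Fin n ⊕ (Σ i, Fin (k i)) → Fin n ⊕ (Σ i, Fin (k i))
  | .inl i => .inl (i + 1)
  | .inr x => .inl x.1

def edgeOf (v : Fin n ⊕ Σ i, Fin (k i)) : Sym2 (Fin n ⊕ Σ i, Fin (k i)) := s(v, partner v)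

theorem adj_iff (hn : 2 ≤ n) {a b : Fin n ⊕ Σ i, Fin (k i)} :
    (pendantCycle n k).Adj a b ↔ b = partner a ∨ a = partner b := by
  have hrel : ∀ a b : Fin n ⊕ Σ i, Fin (k i),
      ((∃ i j : Fin n, a = .inl i ∧ b = .inl j ∧ (i.val + 1) % n = j.val) ∨
        ∃ (i : Fin n) (j : Fin (k i)), a = .inr ⟨i, j⟩ ∧ b = .inl i) ↔ b = partner a := by
    have hsucc : ∀ i j : Fin n, (i.val + 1) % n = j.val ↔ j = i + 1 := fun i j => by
      rw [Fin.ext_iff, Fin.val_add, Fin.val_one', Nat.add_mod_mod, eq_comm]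
    rintro (i | ⟨i, j⟩) b
    · simp [partner, hsucc]
    · simp [partner]
  have hne : ∀ a : Fin n ⊕ Σ i, Fin (k i), partner a ≠ a := by
    rintro (i | x) h
    · have := Fin.val_add_one_eq_ite i
      simp only [partner, Sum.inl.injEq] at h
      rw [h] at this
      split_ifs at this <;> omega
    · simp [partner] at h
  rw [pendantCycle, SimpleGraph.fromRel_adj, hrel, hrel]
  constructor
  · exact fun h => h.2
  · rintro (rfl | rfl)
    exacts [⟨(hne a).symm, .inl rfl⟩, ⟨hne b, .inr rfl⟩]

theorem edgeOf_injective (hn : 3 ≤ n) :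
    Function.Injective (edgeOf : (Fin n ⊕ Σ i, Fin (k i)) → _) := by
  intro v w h
  rcases Sym2.eq_iff.1 h with ⟨hvw, -⟩ | ⟨hv, hw⟩
  · exact hvw
  · rcases v with i | x <;> rcases w with j | y <;> simp only [partner, reduceCtorEq,
      Sum.inl.injEq] at hv hw
    -- two distinct cycle vertices each following the other would force `n ∣ 2`
    exfalso
    have hi := Fin.val_add_one_eq_ite i
    have hj := Fin.val_add_one_eq_ite j
    rw [hw] at hi
    rw [← hv] at hj
    split_ifs at hi hj <;> omega

theorem range_edgeOf (hn : 2 ≤ n) :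
    Set.range (edgeOf : (Fin n ⊕ Σ i, Fin (k i)) → _) = (pendantCycle n k).edgeSet := by
  ext e
  induction e using Sym2.ind with
  | h a b =>
    simp only [Set.mem_range, edgeOf, SimpleGraph.mem_edgeSet, adj_iff hn, Sym2.eq_iff]
    constructor
    · rintro ⟨v, ⟨rfl, rfl⟩ | ⟨rfl, rfl⟩⟩
      exacts [.inl rfl, .inr rfl]
    · rintro (rfl | rfl)
      exacts [⟨a, .inl ⟨rfl, rfl⟩⟩, ⟨b, .inr ⟨rfl, rfl⟩⟩]

theorem ncard_edgeSet (hn : 3 ≤ n) :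
    (pendantCycle n k).edgeSet.ncard = Fintype.card (Fin n ⊕ Σ i, Fin (k i)) := by
  rw [← range_edgeOf (by omega), Set.ncard_range_of_injective (edgeOf_injective hn),
    Nat.card_eq_fintype_card]

theorem bijOn_edgeSet_iff (hn : 3 ≤ n) {β : Type*} {g : Sym2 (Fin n ⊕ Σ i, Fin (k i)) → β}
    {t : Set β} : Set.BijOn g (pendantCycle n k).edgeSet t ↔ Set.BijOn (g ∘ edgeOf) Set.univ t := by
  rw [Set.bijOn_comp_iff (edgeOf_injective hn).injOn, Set.image_univ, range_edgeOf (by omega)]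

theorem sum_comp_partner (f : (Fin n ⊕ Σ i, Fin (k i)) → ℕ) :
    ∑ v, f (partner v) = ∑ i, (k i + 1) * f (.inl i) := by
  have hshift : ∑ i : Fin n, f (.inl (i + 1)) = ∑ i, f (.inl i) :=
    Fintype.sum_equiv (Equiv.addRight 1) _ _ fun _ => rfl
  simp only [Fintype.sum_sum_type, partner, Fintype.sum_sigma, Finset.sum_const,
    Finset.card_univ, Fintype.card_fin, smul_eq_mul, hshift, add_mul, one_mul,
    Finset.sum_add_distrib, add_comm]

theorem _root_.IsSEMT.card_mul_eq (hn : 3 ≤ n) {fv : (Fin n ⊕ Σ i, Fin (k i)) → ℕ}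
    {fe : Sym2 (Fin n ⊕ Σ i, Fin (k i)) → ℕ} {cf : ℕ} (h : IsSEMT (pendantCycle n k) fv fe cf) :
    Fintype.card (Fin n ⊕ Σ i, Fin (k i)) * cf =
      Fintype.card (Fin n ⊕ Σ i, Fin (k i)) * (2 * Fintype.card (Fin n ⊕ Σ i, Fin (k i)) + 1) +
        ∑ i, (k i + 1) * fv (.inl i) := by
  set p := Fintype.card (Fin n ⊕ Σ i, Fin (k i))
  obtain ⟨hv, he, hmagic⟩ := h
  rw [ncard_edgeSet hn, bijOn_edgeSet_iff hn] at he
  have hsum : ∑ v, (fv v + fv (partner v) + fe (edgeOf v)) = p * cf :=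
    (Finset.sum_const_nat fun v _ => hmagic v _ ((adj_iff (by omega)).2 (.inl rfl))).trans
      (by rw [Finset.card_univ])
  have hV := sum_Icc_id_mul_two 0 p
  have hE := sum_Icc_id_mul_two p p
  rw [zero_add, zero_add, ← Fintype.sum_eq_sum_Icc_of_bijOn hv] at hV
  rw [← Fintype.sum_eq_sum_Icc_of_bijOn he] at hE
  rw [Finset.sum_add_distrib, Finset.sum_add_distrib, sum_comp_partner] at hsum
  simp only [Function.comp_apply] at hE
  linarith

end pendantCycle

/-- The graph `G_{n,k,c}` of the paper is `pendantCycle n (lastHeavy n k c)`. -/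
def lastHeavy (n k c : ℕ) (i : Fin n) : ℕ := if i.val = n - 1 then k + c else k

section LastHeavy

variable {n k c : ℕ}

theorem lastHeavy_succ (i : Fin (n + 1)) :
    lastHeavy (n + 1) k c i = k + if i = Fin.last n then c else 0 := by
  simp only [lastHeavy, Fin.ext_iff, Fin.val_last, Nat.add_sub_cancel]
  split_ifs <;> rfl

theorem sum_lastHeavy_mul (f : Fin (n + 1) → ℕ) :
    ∑ i, lastHeavy (n + 1) k c i * f i = k * ∑ i, f i + c * f (Fin.last n) := by
  simp [lastHeavy_succ, add_mul, ite_mul, Finset.sum_add_distrib, Finset.mul_sum]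

theorem card_lastHeavy :
    Fintype.card (Fin (n + 1) ⊕ Σ i, Fin (lastHeavy (n + 1) k c i)) = (n + 1) * (k + 1) + c := by
  have := sum_lastHeavy_mul (n := n) (k := k) (c := c) 1
  simp only [Pi.one_apply, mul_one, Finset.sum_const, Finset.card_univ, Fintype.card_fin,
    smul_eq_mul] at this
  simp only [Fintype.card_sum, Fintype.card_sigma, Fintype.card_fin, this]
  ring

end LastHeavy

theorem IsSEMT.lastHeavy_magic_ge {m k c : ℕ} (hn : 3 ≤ 2 * m + 1)
    (hub : c * (2 * m + 1 - 3) < 2 * (2 * m + 1) * (k + 1))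
    {fv : (Fin (2 * m + 1) ⊕ Σ i, Fin (lastHeavy (2 * m + 1) k c i)) → ℕ}
    {fe : Sym2 (Fin (2 * m + 1) ⊕ Σ i, Fin (lastHeavy (2 * m + 1) k c i)) → ℕ} {cf : ℕ}
    (h : IsSEMT (pendantCycle (2 * m + 1) (lastHeavy (2 * m + 1) k c)) fv fe cf) :
    2 * (2 * m + 1) * (k + 1) + 2 * c + (2 * m + 1 + 3) / 2 ≤ cf := by
  have hmul := h.card_mul_eq hn
  simp only [card_lastHeavy, add_one_mul, Finset.sum_add_distrib, sum_lastHeavy_mul] at hmul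
  have hcycle : (2 * m + 1) * (2 * m + 2) ≤ (∑ i, fv (.inl i)) * 2 := by
    have hinj : Function.Injective fun i => fv (.inl i) :=
      fun i j hij => Sum.inl_injective (h.1.injOn trivial trivial hij)
    have hle := Fintype.sum_Icc_card_le_sum_of_injective hinj
      fun i => (h.1.mapsTo (Set.mem_univ (.inl i))).1
    have hgauss := sum_Icc_id_mul_two 0 (2 * m + 1)
    rw [Fintype.card_fin] at hle
    rw [zero_add, zero_add] at hgauss
    linarith
  have hlast : c ≤ c * fv (.inl (Fin.last (2 * m))) :=
    Nat.le_mul_of_pos_right c (h.1.mapsTo (Set.mem_univ _)).1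
  have hsub : c * (2 * m + 1 - 3) + 2 * c = 2 * m * c := by
    zify [hn]
    ring
  rw [show (2 * m + 1 + 3) / 2 = m + 2 by omega]
  by_contra! hlt
  have hcf := Nat.mul_le_mul_left ((2 * m + 1) * (k + 1) + c)
    (show cf ≤ 2 * ((2 * m + 1) * (k + 1) + c) + m + 1 by linarith)
  have hC := Nat.mul_le_mul_left (k + 1) hcycle
  linarith

def IsLevelKey (N k c : ℕ) (x : ℕ × ℕ) : Prop := x.1 ≤ k ∧ x.2 < N ∨ x.1 = k + 1 ∧ x.2 < c

namespace IsLevelKey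

variable {N k c : ℕ} {x y : ℕ × ℕ}

theorem rank_lt (hx : IsLevelKey N k c x) : N * x.1 + x.2 < N * (k + 1) + c := by
  rcases hx with ⟨h1, h2⟩ | ⟨h1, h2⟩
  · have := Nat.mul_le_mul_left N (Nat.add_le_add_right h1 1)
    simp only [mul_add_one] at this ⊢
    omega
  · rw [h1]
    omega

theorem rank_injective (hx : IsLevelKey N k c x) (hy : IsLevelKey N k c y)
    (h : N * x.1 + x.2 = N * y.1 + y.2) : x = y := by
  have below : ∀ {x y : ℕ × ℕ}, x.1 ≤ k → x.2 < N → y.1 = k + 1 →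
      N * x.1 + x.2 ≠ N * y.1 + y.2 := fun h1 h2 h3 => by
    have := Nat.mul_le_mul_left N (Nat.add_le_add_right h1 1)
    rw [mul_add_one, ← h3] at this
    omega
  rcases hx with ⟨hx1, hx2⟩ | ⟨hx1, -⟩ <;> rcases hy with ⟨hy1, hy2⟩ | ⟨hy1, -⟩
  · have hN : 0 < N := by omega
    have h1 : x.1 = y.1 := by
      have := congrArg (· / N) h
      simpa [Nat.mul_add_div hN, Nat.div_eq_of_lt hx2, Nat.div_eq_of_lt hy2] using this
    rw [h1] at h
    exact Prod.ext h1 (by omega)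
  · exact absurd h (below hx1 hx2 hy1)
  · exact absurd h.symm (below hy1 hy2 hx1)
  · rw [hx1, hy1] at h
    exact Prod.ext (hx1.trans hy1.symm) (by omega)

end IsLevelKey

section LevelKey

variable {n k c : ℕ}

theorem val_lt_lastHeavy {i : Fin (n + 1)} (j : Fin (lastHeavy (n + 1) k c i)) :
    j.val < k + if i = Fin.last n then c else 0 :=
  lastHeavy_succ (k := k) (c := c) i ▸ j.isLt

theorem eq_last_of_le {i : Fin (n + 1)} (j : Fin (lastHeavy (n + 1) k c i)) (hj : k ≤ j.val) :
    i = Fin.last n := by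
  by_contra hi
  have := val_lt_lastHeavy j
  rw [if_neg hi] at this
  omega

def levelKey (α β : Fin n → ℕ) : (Fin n ⊕ Σ i, Fin (lastHeavy n k c i)) → ℕ × ℕ
  | .inl i => (0, α i)
  | .inr ⟨i, j⟩ => if k ≤ j.val then (k + 1, j.val - k) else (j.val + 1, β i)

theorem isLevelKey_levelKey {α β : Fin (n + 1) → ℕ} (hα : ∀ i, α i < n + 1)
    (hβ : ∀ i, β i < n + 1) (v : Fin (n + 1) ⊕ Σ i, Fin (lastHeavy (n + 1) k c i)) :
    IsLevelKey (n + 1) k c (levelKey α β v) := by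
  rcases v with i | ⟨i, j⟩
  · exact .inl ⟨Nat.zero_le k, hα i⟩
  · have hj := val_lt_lastHeavy j
    simp only [levelKey]
    split_ifs with hk
    · rw [if_pos (eq_last_of_le j hk)] at hj
      exact .inr ⟨rfl, by dsimp only; omega⟩
    · exact .inl ⟨by dsimp only; omega, hβ i⟩

theorem levelKey_injective {α β : Fin (n + 1) → ℕ} (hα : α.Injective) (hβ : β.Injective) :
    (levelKey α β : (Fin (n + 1) ⊕ Σ i, Fin (lastHeavy (n + 1) k c i)) → ℕ × ℕ).Injective := by
  rintro (i | ⟨i, j⟩) (i' | ⟨i', j'⟩) h <;> simp only [levelKey] at h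
  · simp only [Prod.mk.injEq, true_and] at h
    rw [hα h]
  · split_ifs at h <;> simp at h
  · split_ifs at h <;> simp at h
  · split_ifs at h with hk hk' hk'
    · obtain rfl : i = i' := (eq_last_of_le j hk).trans (eq_last_of_le j' hk').symm
      simp only [Prod.mk.injEq, true_and] at h
      rw [Fin.ext (by omega : j.val = j'.val)]
    · simp only [Prod.mk.injEq] at h; omega
    · simp only [Prod.mk.injEq] at h; omega
    · simp only [Prod.mk.injEq, add_left_inj] at h
      obtain rfl := hβ h.2
      rw [Fin.ext h.1]

end LevelKey

section LevelRank

variable {n k c : ℕ}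

def levelRank (α β : Fin n → ℕ) (v : Fin n ⊕ Σ i, Fin (lastHeavy n k c i)) : ℕ :=
  n * (levelKey α β v).1 + (levelKey α β v).2

variable {α β : Fin (n + 1) → ℕ}

theorem levelRank_lt (hα : ∀ i, α i < n + 1) (hβ : ∀ i, β i < n + 1)
    (v : Fin (n + 1) ⊕ Σ i, Fin (lastHeavy (n + 1) k c i)) :
    levelRank α β v < (n + 1) * (k + 1) + c :=
  (isLevelKey_levelKey hα hβ v).rank_lt

theorem levelRank_injective (hα : ∀ i, α i < n + 1) (hβ : ∀ i, β i < n + 1)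
    (hα' : α.Injective) (hβ' : β.Injective) :
    (levelRank α β : (Fin (n + 1) ⊕ Σ i, Fin (lastHeavy (n + 1) k c i)) → ℕ).Injective :=
  fun _ _ h => levelKey_injective hα' hβ'
    ((isLevelKey_levelKey hα hβ _).rank_injective (isLevelKey_levelKey hα hβ _) h)

end LevelRank

section Halving

open Fin.NatCast

variable (m : ℕ)

/-- Multiplication by `m + 1 = 2⁻¹` in `ℤ/(2m+1)`. Consecutive cycle vertices get positions `x` and
`x + m + 1`, so the cycle edge sums `2x + m + 1` (for `x < m`) and `2x - m` (for `x ≥ m`) run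
through `m, …, 3m` exactly once. -/
def halve (i : Fin (2 * m + 1)) : Fin (2 * m + 1) := i * ((m + 1 : ℕ) : Fin (2 * m + 1))

theorem val_halve_add_one (i : Fin (2 * m + 1)) :
    (halve m (i + 1)).val =
      if (halve m i).val < m then (halve m i).val + m + 1 else (halve m i).val - m := by
  have hi := (halve m i).isLt
  rcases Nat.eq_zero_or_pos m with rfl | hm
  · have := (halve 0 (i + 1)).isLt
    split_ifs <;> omega
  have hu : (((m + 1 : ℕ) : Fin (2 * m + 1))).val = m + 1 := by
    rw [Fin.val_natCast, Nat.mod_eq_of_lt (by omega)]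
  rw [halve, add_one_mul, Fin.val_add_eq_ite, hu, ← halve]
  split_ifs <;> omega

theorem halve_injective : (halve m).Injective := by
  have h2 : ((m + 1 : ℕ) : Fin (2 * m + 1)) * ((2 : ℕ) : Fin (2 * m + 1)) = 1 := by
    rw [Fin.ext_iff, Fin.val_mul, Fin.val_natCast, Fin.val_natCast, ← Nat.mul_mod, Fin.val_one',
      show (m + 1) * 2 = 1 + (2 * m + 1) by ring, Nat.add_mod_right]
  intro i j h
  simpa only [halve, mul_assoc, h2, mul_one] using congrArg (· * ((2 : ℕ) : Fin (2 * m + 1))) h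

theorem val_halve_last : (halve m (Fin.last (2 * m))).val = m := by
  rcases Nat.eq_zero_or_pos m with rfl | hm
  · exact Nat.lt_one_iff.1 (halve 0 _).isLt
  rw [halve, Fin.val_mul, Fin.val_last, Fin.val_natCast, Nat.mod_eq_of_lt (by omega : m + 1 < _),
    show 2 * m * (m + 1) = m + (2 * m + 1) * m by ring, Nat.add_mul_mod_self_left,
    Nat.mod_eq_of_lt (by omega)]

theorem le_val_halve_add_val_halve_add_one (i : Fin (2 * m + 1)) :
    m ≤ (halve m i).val + (halve m (i + 1)).val := by
  rw [val_halve_add_one]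
  split_ifs <;> omega

def cycleRank (i : Fin (2 * m + 1)) : ℕ := (halve m i).val + (halve m (i + 1)).val - m

theorem cycleRank_lt (i : Fin (2 * m + 1)) : cycleRank m i < 2 * m + 1 := by
  have := (halve m i).isLt
  rw [cycleRank, val_halve_add_one]
  split_ifs <;> omega

theorem cycleRank_injective : (cycleRank m).Injective := by
  intro i j h
  have hi := (halve m i).isLt
  have hj := (halve m j).isLt
  rw [cycleRank, cycleRank, val_halve_add_one, val_halve_add_one] at h
  refine halve_injective m (Fin.ext ?_)
  split_ifs at h <;> omega

end Halving

section Construction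

variable (m k c : ℕ)

def vertexLabel (v : Fin (2 * m + 1) ⊕ Σ i, Fin (lastHeavy (2 * m + 1) k c i)) : ℕ :=
  levelRank (fun i => (halve m i).val) (fun i => (halve m (i + 1)).val) v + 1

theorem vertexLabel_add_partner (v : Fin (2 * m + 1) ⊕ Σ i, Fin (lastHeavy (2 * m + 1) k c i)) :
    vertexLabel m k c v + vertexLabel m k c (pendantCycle.partner v) =
      levelRank (cycleRank m) (cycleRank m) v + (m + 2) := by
  rcases v with i | ⟨i, j⟩
  · have := le_val_halve_add_val_halve_add_one m i
    simp only [vertexLabel, levelRank, levelKey, pendantCycle.partner, cycleRank]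
    omega
  · simp only [vertexLabel, levelRank, levelKey, pendantCycle.partner]
    split_ifs with hk
    · obtain rfl := eq_last_of_le j hk
      rw [val_halve_last]
      omega
    · have := le_val_halve_add_val_halve_add_one m i
      simp only [cycleRank]
      omega

theorem bijOn_vertexLabel :
    Set.BijOn (vertexLabel m k c) Set.univ
      (Set.Icc 1 (Fintype.card (Fin (2 * m + 1) ⊕ Σ i, Fin (lastHeavy (2 * m + 1) k c i)))) := by
  have hlt : ∀ i, (halve m i).val < 2 * m + 1 := fun i => (halve m i).isLt
  have hinj := levelRank_injective (k := k) (c := c) hlt (fun i => hlt (i + 1))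
    (fun i j h => halve_injective m (Fin.ext h))
    (fun i j h => add_right_cancel (halve_injective m (Fin.ext h)))
  simpa only [zero_add] using Fintype.bijOn_Icc_of_injective (f := vertexLabel m k c) (a := 0)
    ((add_left_injective 1).comp hinj) fun v => by
      have := levelRank_lt hlt (fun i => hlt (i + 1)) v
      simp only [vertexLabel, Set.mem_Icc, card_lastHeavy]
      omega

theorem bijOn_edgeSum_vertexLabel (hm : 1 ≤ m) :
    Set.BijOn (edgeSum (vertexLabel m k c)) (pendantCycle _ (lastHeavy (2 * m + 1) k c)).edgeSet
      (Set.Icc (m + 1 + 1) (m + 1 + (pendantCycle _ (lastHeavy (2 * m + 1) k c)).edgeSet.ncard)) := by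
  have hn : 3 ≤ 2 * m + 1 := by omega
  have hsum : edgeSum (vertexLabel m k c) ∘ pendantCycle.edgeOf =
      fun v => levelRank (cycleRank m) (cycleRank m) v + (m + 2) :=
    funext (vertexLabel_add_partner m k c)
  rw [pendantCycle.ncard_edgeSet hn, pendantCycle.bijOn_edgeSet_iff hn, hsum]
  refine Fintype.bijOn_Icc_of_injective ((add_left_injective _).comp (levelRank_injective
    (cycleRank_lt m) (cycleRank_lt m) (cycleRank_injective m) (cycleRank_injective m))) fun v => ?_
  have := levelRank_lt (cycleRank_lt m) (cycleRank_lt m) v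
  simp only [Set.mem_Icc, card_lastHeavy]
  omega

theorem exists_isSEMT_lastHeavy (hm : 1 ≤ m) :
    ∃ fv fe, IsSEMT (pendantCycle (2 * m + 1) (lastHeavy (2 * m + 1) k c)) fv fe
      (2 * (2 * m + 1) * (k + 1) + 2 * c + (2 * m + 1 + 3) / 2) := by
  have h := isSEMT_of_bijOn_edgeSum (bijOn_vertexLabel m k c) (bijOn_edgeSum_vertexLabel m k c hm)
  have hK : Fintype.card (Fin (2 * m + 1) ⊕ Σ i, Fin (lastHeavy (2 * m + 1) k c i)) +
      (pendantCycle _ (lastHeavy (2 * m + 1) k c)).edgeSet.ncard + (m + 1) + 1 =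
      2 * (2 * m + 1) * (k + 1) + 2 * c + (2 * m + 1 + 3) / 2 := by
    rw [pendantCycle.ncard_edgeSet (by omega), card_lastHeavy,
      show (2 * m + 1 + 3) / 2 = m + 2 by omega]
    ring
  rw [hK] at h
  exact ⟨_, _, h⟩

end Construction

theorem stmt_12_general (n k c : ℕ) (hn : 3 ≤ n) (ho : Odd n)
    (hub : c * (n - 3) < 2 * n * (k + 1)) :
    (∀ (fv : (Fin n ⊕ Σ i : Fin n, Fin (if i.val = n - 1 then k + c else k)) → ℕ)
        (fe : Sym2 (Fin n ⊕ Σ i : Fin n, Fin (if i.val = n - 1 then k + c else k)) → ℕ)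
        (cf : ℕ),
        IsSEMT (pendantCycle n (fun i => if i.val = n - 1 then k + c else k)) fv fe cf →
        2 * n * (k + 1) + 2 * c + (n + 3) / 2 ≤ cf) ∧
    2 * n * (k + 1) + 2 * c + (n + 3) / 2 ≤
      sInf {cf | ∃ fv fe,
        IsSEMT (pendantCycle n (fun i => if i.val = n - 1 then k + c else k)) fv fe cf} := by
  obtain ⟨m, rfl⟩ := ho
  have hlower : ∀ fv fe cf,
      IsSEMT (pendantCycle (2 * m + 1) (lastHeavy (2 * m + 1) k c)) fv fe cf →
      2 * (2 * m + 1) * (k + 1) + 2 * c + (2 * m + 1 + 3) / 2 ≤ cf :=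
    fun _ _ _ h => h.lastHeavy_magic_ge hn hub
  refine ⟨hlower, le_csInf ?_ fun cf ⟨fv, fe, h⟩ => hlower fv fe cf h⟩
  obtain ⟨fv, fe, h⟩ := exists_isSEMT_lastHeavy m k c (by omega)
  exact ⟨_, fv, fe, h⟩

/-- Lower bound: for `1 ≤ c` with `c(n-3) < 2n(k+1)`, every super edge-magic total labeling of
`G_{n,k,c}` has magic constant at least `2n(k+1) + 2c + (n+3)/2`; hence so does `sm(G_{n,k,c})`. -/
theorem stmt_12 (n k c : ℕ) (hn : 3 ≤ n) (ho : Odd n) (hc : 1 ≤ c)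
    (hub : c * (n - 3) < 2 * n * (k + 1)) :
    (∀ (fv : (Fin n ⊕ Σ i : Fin n, Fin (if i.val = n - 1 then k + c else k)) → ℕ)
        (fe : Sym2 (Fin n ⊕ Σ i : Fin n, Fin (if i.val = n - 1 then k + c else k)) → ℕ)
        (cf : ℕ),
        IsSEMT (pendantCycle n (fun i => if i.val = n - 1 then k + c else k)) fv fe cf →
        2 * n * (k + 1) + 2 * c + (n + 3) / 2 ≤ cf) ∧
    2 * n * (k + 1) + 2 * c + (n + 3) / 2 ≤
      sInf {cf | ∃ fv fe,
        IsSEMT (pendantCycle n (fun i => if i.val = n - 1 then k + c else k)) fv fe cf} :=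
  stmt_12_general n k c hn ho hub
end
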